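/- For M, H > 0 there exists a unique q_* > 0 satisfying q_* = M √(G(q_*,q_*)/H), where G(q,q) = I_1(q)K_1(q); moreover along any evolution conserving H = (p² + M²/q²)G(q,q), one has q(t) ≥ q_* for all t. -/

import Mathlib

open Real Filter Set

/-- Modified Bessel function of the first kind, order 1 (power series). -/
noncomputable def besselI1 (x : ℝ) : ℝ :=
  ∑' k : ℕ, (x / 2) ^ (2 * k + 1) / ((Nat.factorial k : ℝ) * (Nat.factorial (k + 1) : ℝ))

/-- Modified Bessel function of the second kind, order 1 (integral representation). -/
noncomputable def besselK1 (x : ℝ) : ℝ :=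
  ∫ t in Set.Ioi (0 : ℝ), Real.exp (-x * Real.cosh t) * Real.cosh t

/-- Diagonal Green's function `G(q) = I₁(q) K₁(q)`. -/
noncomputable def Gdiag (q : ℝ) : ℝ := besselI1 q * besselK1 q

/-- Green's function of the radial Helmholtz operator:
`G(r,ξ) = I₁(min(r,ξ)) K₁(max(r,ξ))`. -/
noncomputable def Grad (r ξ : ℝ) : ℝ := besselI1 (min r ξ) * besselK1 (max r ξ)

/-!
Put `φ(q) = G(q) / q²`. For `q > 0` the equation `q = M √(G(q) / H)` says `φ(q) = H / M²`,
and conservation of `H` gives `φ(q(t)) ≤ H / M²` since the kinetic term `p² G` is nonnegative.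
So all claims follow once `φ` is a continuous, strictly decreasing map of `(0, ∞)` onto itself.

Strict decrease comes from `G(q) / q = (I₁(q) / sinh q) · (sinh q · K₁(q) / q)`, a product of
two nonnegative nonincreasing factors: the first because the ratio of the Taylor coefficients
of `I₁` and `sinh` decreases, the second because `sinh q · e^{-q cosh t} / q` decreases in `q`
for every `t`. Surjectivity is the intermediate value theorem, with `φ(q) ≥ K₁(1) / (2q)` for
`q ≤ 1` and `φ(q) ≤ G(1) / q` for `q ≥ 1`.
-/

open scoped Nat

open MeasureTheory

theorem pow_mul_pow_le_pow_mul_pow {x y : ℝ} (hx : 0 ≤ x) (hxy : x ≤ y) {m n : ℕ}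
    (hmn : m ≤ n) : y ^ m * x ^ n ≤ x ^ m * y ^ n := by
  have hy : 0 ≤ y := hx.trans hxy
  rw [← pow_mul_pow_sub x hmn, ← pow_mul_pow_sub y hmn]
  calc y ^ m * (x ^ m * x ^ (n - m)) = x ^ m * (y ^ m * x ^ (n - m)) := by ring
    _ ≤ x ^ m * (y ^ m * y ^ (n - m)) := by gcongr

theorem tsum_le_tsum_of_add_swap_le {α : Type*} {F G : α × α → ℝ} (hF : Summable F)
    (hG : Summable G) (h : ∀ z, F z + F z.swap ≤ G z + G z.swap) :
    ∑' z, F z ≤ ∑' z, G z := by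
  have hsum := (hF.add hF.prod_symm).tsum_le_tsum h (hG.add hG.prod_symm)
  have hswapF : ∑' z : α × α, F z.swap = ∑' z, F z := (Equiv.prodComm α α).tsum_eq F
  have hswapG : ∑' z : α × α, G z.swap = ∑' z, G z := (Equiv.prodComm α α).tsum_eq G
  rw [hF.tsum_add hF.prod_symm, hG.tsum_add hG.prod_symm, hswapF, hswapG] at hsum
  linarith

/-- Ratio monotonicity for power series: if `a k / b k` decreases, so does
`(∑ a k x ^ e k) / (∑ b k x ^ e k)` on `[0, ∞)`. -/
theorem tsum_mul_tsum_le_of_antitone_div {a b : ℕ → ℝ} {e : ℕ → ℕ} (he : Monotone e)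
    (ha : ∀ k, 0 ≤ a k) (hb : ∀ k, 0 < b k) (hab : Antitone fun k => a k / b k)
    {x y : ℝ} (hx : 0 ≤ x) (hxy : x ≤ y)
    (hsa : Summable fun k => a k * y ^ e k) (hsb : Summable fun k => b k * y ^ e k) :
    (∑' k, a k * y ^ e k) * ∑' k, b k * x ^ e k ≤
      (∑' k, a k * x ^ e k) * ∑' k, b k * y ^ e k := by
  have hy : 0 ≤ y := hx.trans hxy
  have hsa' : Summable fun k => a k * x ^ e k :=
    hsa.of_nonneg_of_le (fun k => mul_nonneg (ha k) (by positivity))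
      (fun k => by gcongr; exact ha k)
  have hsb' : Summable fun k => b k * x ^ e k :=
    hsb.of_nonneg_of_le (fun k => mul_nonneg (hb k).le (by positivity))
      (fun k => by gcongr; exact (hb k).le)
  set F : ℕ × ℕ → ℝ := fun z => a z.1 * y ^ e z.1 * (b z.2 * x ^ e z.2)
  set G : ℕ × ℕ → ℝ := fun z => a z.1 * x ^ e z.1 * (b z.2 * y ^ e z.2)
  have hF : Summable F := hsa.mul_of_nonneg hsb' (fun k => mul_nonneg (ha k) (by positivity))
    (fun k => mul_nonneg (hb k).le (by positivity))
  have hG : Summable G := hsa'.mul_of_nonneg hsb (fun k => mul_nonneg (ha k) (by positivity))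
    (fun k => mul_nonneg (hb k).le (by positivity))
  have hcross :
      ∀ j k, 0 ≤ (a j * b k - a k * b j) * (x ^ e j * y ^ e k - y ^ e j * x ^ e k) := by
    intro j k
    have hcoef {j k : ℕ} (hjk : j ≤ k) : a k * b j ≤ a j * b k := by
      have := hab hjk
      rwa [div_le_div_iff₀ (hb k) (hb j)] at this
    rcases le_total j k with hjk | hkj
    · exact mul_nonneg (sub_nonneg.2 (hcoef hjk))
        (sub_nonneg.2 (pow_mul_pow_le_pow_mul_pow hx hxy (he hjk)))
    · have hpow := pow_mul_pow_le_pow_mul_pow hx hxy (he hkj)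
      exact mul_nonneg_of_nonpos_of_nonpos (sub_nonpos.2 (hcoef hkj)) (by linarith)
  have hpair : ∀ z, F z + F z.swap ≤ G z + G z.swap := by
    rintro ⟨j, k⟩
    simp only [F, G, Prod.swap_prod_mk]
    linear_combination hcross j k
  rw [hsa.tsum_mul_tsum hsb' hF, hsa'.tsum_mul_tsum hsb hG]
  exact tsum_le_tsum_of_add_swap_le hF hG hpair

noncomputable def besselI1Coeff (k : ℕ) : ℝ := ((2 : ℝ) ^ (2 * k + 1) * k ! * (k + 1)!)⁻¹

theorem besselI1Coeff_pos (k : ℕ) : 0 < besselI1Coeff k := by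
  unfold besselI1Coeff; positivity

theorem besselI1_eq_tsum (x : ℝ) : besselI1 x = ∑' k, besselI1Coeff k * x ^ (2 * k + 1) := by
  unfold besselI1 besselI1Coeff
  congr 1 with k
  rw [div_pow, mul_assoc, div_div, div_eq_inv_mul]

theorem hasSum_sinh_inv_factorial_mul (x : ℝ) :
    HasSum (fun k => ((2 * k + 1)! : ℝ)⁻¹ * x ^ (2 * k + 1)) (sinh x) := by
  simpa only [div_eq_inv_mul] using Real.hasSum_sinh x

theorem antitone_besselI1Coeff_mul_factorial :
    Antitone fun k => besselI1Coeff k * (2 * k + 1)! := by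
  refine antitone_nat_of_succ_le fun k => ?_
  have hstep : besselI1Coeff (k + 1) * (2 * (k + 1) + 1)! =
      besselI1Coeff k * (2 * k + 1)! * ((2 * k + 3) / (2 * k + 4)) := by
    simp only [besselI1Coeff, show 2 * (k + 1) + 1 = 2 * k + 1 + 1 + 1 by ring, Nat.factorial_succ]
    push_cast
    field_simp
    ring
  rw [hstep]
  refine mul_le_of_le_one_right (by have := besselI1Coeff_pos k; positivity) ?_
  rw [div_le_one (by positivity)]
  linarith

theorem besselI1Coeff_le (k : ℕ) : besselI1Coeff k ≤ ((2 * k + 1)! : ℝ)⁻¹ := by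
  have h : besselI1Coeff k * (2 * k + 1)! ≤ besselI1Coeff 0 * (2 * 0 + 1)! :=
    antitone_besselI1Coeff_mul_factorial (Nat.zero_le k)
  have h0 : besselI1Coeff 0 * (2 * 0 + 1)! = 1 / 2 := by norm_num [besselI1Coeff]
  rw [h0, ← le_div_iff₀ (by positivity)] at h
  calc besselI1Coeff k ≤ 1 / 2 / (2 * k + 1)! := h
    _ ≤ ((2 * k + 1)! : ℝ)⁻¹ := by rw [inv_eq_one_div]; gcongr; norm_num

theorem norm_besselI1Coeff_mul_pow_le {x R : ℝ} (hxR : |x| ≤ R) (k : ℕ) :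
    ‖besselI1Coeff k * x ^ (2 * k + 1)‖ ≤ ((2 * k + 1)! : ℝ)⁻¹ * R ^ (2 * k + 1) := by
  rw [norm_mul, norm_pow, Real.norm_eq_abs, Real.norm_eq_abs, abs_of_pos (besselI1Coeff_pos k)]
  gcongr
  exact besselI1Coeff_le k

theorem summable_besselI1Coeff_mul_pow (x : ℝ) :
    Summable fun k => besselI1Coeff k * x ^ (2 * k + 1) :=
  .of_norm_bounded (hasSum_sinh_inv_factorial_mul |x|).summable
    (norm_besselI1Coeff_mul_pow_le le_rfl)

theorem continuous_besselI1 : Continuous besselI1 := by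
  refine continuous_iff_continuousAt.2 fun x => ?_
  have hcont : ContinuousOn besselI1 (Icc (-(|x| + 1)) (|x| + 1)) := by
    simp_rw [funext besselI1_eq_tsum]
    refine continuousOn_tsum (fun k => (continuous_const.mul (continuous_pow _)).continuousOn)
      (hasSum_sinh_inv_factorial_mul (|x| + 1)).summable
      fun k y hy => norm_besselI1Coeff_mul_pow_le (abs_le.2 hy) k
  exact hcont.continuousAt (Icc_mem_nhds (by linarith [neg_abs_le x]) (by linarith [le_abs_self x]))

theorem half_le_besselI1 {x : ℝ} (hx : 0 ≤ x) : x / 2 ≤ besselI1 x := by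
  have h := (summable_besselI1Coeff_mul_pow x).le_tsum 0
    fun k _ => mul_nonneg (besselI1Coeff_pos k).le (by positivity)
  rw [← besselI1_eq_tsum] at h
  simpa [besselI1Coeff, div_eq_inv_mul] using h

theorem besselI1_mul_sinh_le {x y : ℝ} (hx : 0 ≤ x) (hxy : x ≤ y) :
    besselI1 y * sinh x ≤ besselI1 x * sinh y := by
  rw [besselI1_eq_tsum, besselI1_eq_tsum, (hasSum_sinh_inv_factorial_mul x).tsum_eq.symm,
    (hasSum_sinh_inv_factorial_mul y).tsum_eq.symm]
  refine tsum_mul_tsum_le_of_antitone_div (fun _ _ h => by omega)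
    (fun k => (besselI1Coeff_pos k).le) (fun k => by positivity) ?_ hx hxy
    (summable_besselI1Coeff_mul_pow y) (hasSum_sinh_inv_factorial_mul y).summable
  simpa only [div_inv_eq_mul] using antitone_besselI1Coeff_mul_factorial

theorem mul_exp_neg_mul_le (u : ℝ) {a : ℝ} (ha : 0 < a) :
    u * exp (-a * u) ≤ 2 / a * exp (-(a / 2) * u) := by
  have hlin : a * u / 2 ≤ exp (a * u / 2) := by linarith [add_one_le_exp (a * u / 2)]
  have hsplit : exp (-a * u) = exp (-(a / 2) * u) * exp (-(a / 2) * u) := by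
    rw [← exp_add]; ring_nf
  have hcancel : exp (a * u / 2) * exp (-(a / 2) * u) = 1 := by
    rw [← exp_add]; ring_nf; exact exp_zero
  calc u * exp (-a * u) = 2 / a * (a * u / 2) * exp (-(a / 2) * u) * exp (-(a / 2) * u) := by
        rw [hsplit]; field_simp
    _ ≤ 2 / a * exp (a * u / 2) * exp (-(a / 2) * u) * exp (-(a / 2) * u) := by gcongr
    _ = 2 / a * exp (-(a / 2) * u) := by rw [mul_assoc (2 / a), hcancel, mul_one]

theorem exp_neg_mul_cosh_mul_cosh_le {a x t : ℝ} (ha : 0 < a) (hax : a ≤ x) (ht : 0 ≤ t) :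
    exp (-x * cosh t) * cosh t ≤ 2 / a * exp (-(a / 2) * t) :=
  calc exp (-x * cosh t) * cosh t ≤ cosh t * exp (-a * cosh t) := by
        rw [mul_comm]; gcongr
    _ ≤ 2 / a * exp (-(a / 2) * cosh t) := mul_exp_neg_mul_le _ ha
    _ ≤ 2 / a * exp (-(a / 2) * t) := by
        have htc : t ≤ cosh t := (self_le_sinh_iff.2 ht).trans (sinh_lt_cosh t).le
        exact mul_le_mul_of_nonneg_left (exp_le_exp.2 (by nlinarith)) (by positivity)

theorem integrableOn_exp_neg_mul_cosh_mul_cosh {x : ℝ} (hx : 0 < x) :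
    IntegrableOn (fun t => exp (-x * cosh t) * cosh t) (Ioi 0) := by
  refine Integrable.mono' ((exp_neg_integrableOn_Ioi 0 (half_pos hx)).const_mul (2 / x))
    (by fun_prop) ?_
  filter_upwards [ae_restrict_mem measurableSet_Ioi] with t ht
  rw [Real.norm_of_nonneg (by positivity)]
  exact exp_neg_mul_cosh_mul_cosh_le hx le_rfl (le_of_lt ht)

theorem besselK1_pos {x : ℝ} (hx : 0 < x) : 0 < besselK1 x := by
  refine (setIntegral_pos_iff_support_of_nonneg_ae
    (.of_forall fun t => by positivity) (integrableOn_exp_neg_mul_cosh_mul_cosh hx)).2 ?_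
  rw [Function.support_eq_univ fun t => by positivity, univ_inter, Real.volume_Ioi]
  exact ENNReal.zero_lt_top

theorem antitoneOn_besselK1 : AntitoneOn besselK1 (Ioi 0) := fun x hx y hy hxy =>
  setIntegral_mono_on (integrableOn_exp_neg_mul_cosh_mul_cosh hy)
    (integrableOn_exp_neg_mul_cosh_mul_cosh hx) measurableSet_Ioi
    fun t _ => by gcongr

theorem continuousOn_besselK1 : ContinuousOn besselK1 (Ioi 0) := by
  intro x₀ (hx₀ : 0 < x₀)
  refine (continuousAt_of_dominated (bound := fun t => 2 / (x₀ / 2) * exp (-(x₀ / 2 / 2) * t))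
    (.of_forall fun x => by fun_prop) ?_
    ((exp_neg_integrableOn_Ioi 0 (by positivity)).const_mul _)
    (.of_forall fun t => by fun_prop)).continuousWithinAt
  filter_upwards [Ioi_mem_nhds (half_lt_self hx₀)] with x hx
  filter_upwards [ae_restrict_mem measurableSet_Ioi] with t ht
  rw [Real.norm_of_nonneg (by positivity)]
  exact exp_neg_mul_cosh_mul_cosh_le (by positivity) (le_of_lt hx) (le_of_lt ht)

/-- `(1 - e^{-s}) / s` is the slope of the convex function `exp` on `[-s, 0]`. -/
theorem antitoneOn_one_sub_exp_neg_div : AntitoneOn (fun s => (1 - exp (-s)) / s) (Ioi 0) := by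
  intro x (hx : 0 < x) y (hy : 0 < y) hxy
  have h := convexOn_exp.secant_mono (mem_univ 0) (mem_univ (-y)) (mem_univ (-x))
    (by linarith) (by linarith) (by linarith)
  rw [exp_zero, sub_zero, sub_zero, div_neg, div_neg, neg_le_neg_iff] at h
  calc (1 - exp (-y)) / y = -((exp (-y) - 1) / y) := by ring
    _ ≤ -((exp (-x) - 1) / x) := neg_le_neg h
    _ = (1 - exp (-x)) / x := by ring

theorem antitoneOn_sinh_mul_exp_neg_mul_div {b : ℝ} (hb : 1 ≤ b) :
    AntitoneOn (fun q => sinh q * exp (-q * b) / q) (Ioi 0) := by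
  have hfactor : ∀ q, 0 < q →
      sinh q * exp (-q * b) / q = (1 - exp (-(2 * q))) / (2 * q) * exp (-q * (b - 1)) := by
    intro q hq
    have h1 : sinh q * exp (-q * b) = (exp (-q * (b - 1)) - exp (-q * (b + 1))) / 2 := by
      rw [sinh_eq, div_mul_eq_mul_div, sub_mul, ← exp_add, ← exp_add]; ring_nf
    have h2 : (1 - exp (-(2 * q))) * exp (-q * (b - 1)) =
        exp (-q * (b - 1)) - exp (-q * (b + 1)) := by
      rw [sub_mul, one_mul, ← exp_add]; ring_nf
    rw [h1, div_mul_eq_mul_div, h2]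
    field_simp
  intro x (hx : 0 < x) y (hy : 0 < y) hxy
  dsimp only
  rw [hfactor x hx, hfactor y hy]
  have hnonneg : 0 ≤ (1 - exp (-(2 * x))) / (2 * x) := by
    have : exp (-(2 * x)) ≤ 1 := exp_le_one_iff.2 (by linarith)
    exact div_nonneg (by linarith) (by linarith)
  refine mul_le_mul (antitoneOn_one_sub_exp_neg_div (by simpa using hx) (by simpa using hy)
    (by linarith)) (exp_le_exp.2 (by nlinarith)) (exp_pos _).le hnonneg

theorem antitoneOn_sinh_mul_besselK1_div :
    AntitoneOn (fun q => sinh q * besselK1 q / q) (Ioi 0) := by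
  have hrepr : ∀ q, sinh q * besselK1 q / q =
      ∫ t in Ioi 0, sinh q / q * (exp (-q * cosh t) * cosh t) := by
    intro q
    rw [integral_const_mul, besselK1, mul_div_right_comm]
  intro x (hx : 0 < x) y (hy : 0 < y) hxy
  simp only [hrepr]
  refine setIntegral_mono_on ((integrableOn_exp_neg_mul_cosh_mul_cosh hy).const_mul _)
    ((integrableOn_exp_neg_mul_cosh_mul_cosh hx).const_mul _) measurableSet_Ioi fun t _ => ?_
  have h := mul_le_mul_of_nonneg_right
    (antitoneOn_sinh_mul_exp_neg_mul_div (one_le_cosh t) hx hy hxy) (cosh_pos t).le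
  convert h using 1 <;> ring

theorem antitoneOn_besselI1_div_sinh : AntitoneOn (fun q => besselI1 q / sinh q) (Ioi 0) := by
  intro x (hx : 0 < x) y (hy : 0 < y) hxy
  rw [div_le_div_iff₀ (sinh_pos_iff.2 hy) (sinh_pos_iff.2 hx)]
  exact besselI1_mul_sinh_le hx.le hxy

theorem antitoneOn_Gdiag_div_self : AntitoneOn (fun q => Gdiag q / q) (Ioi 0) := by
  have hfactor :
      ∀ q, 0 < q → Gdiag q / q = besselI1 q / sinh q * (sinh q * besselK1 q / q) := by
    intro q hq
    have := (sinh_pos_iff.2 hq).ne'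
    rw [Gdiag]; field_simp
  intro x (hx : 0 < x) y (hy : 0 < y) hxy
  dsimp only
  rw [hfactor x hx, hfactor y hy]
  have hsx := sinh_pos_iff.2 hx
  have hK := besselK1_pos hy
  have hI : 0 ≤ besselI1 x := by linarith [half_le_besselI1 hx.le]
  exact mul_le_mul (antitoneOn_besselI1_div_sinh hx hy hxy)
    (antitoneOn_sinh_mul_besselK1_div hx hy hxy) (by positivity) (by positivity)

theorem Gdiag_pos {q : ℝ} (hq : 0 < q) : 0 < Gdiag q :=
  mul_pos ((half_pos hq).trans_le (half_le_besselI1 hq.le)) (besselK1_pos hq)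

theorem strictAntiOn_Gdiag_div_sq : StrictAntiOn (fun q => Gdiag q / q ^ 2) (Ioi 0) := by
  intro x (hx : 0 < x) y (hy : 0 < y) hxy
  have h : Gdiag y / y ≤ Gdiag x / x := antitoneOn_Gdiag_div_self hx hy hxy.le
  calc Gdiag y / y ^ 2 = Gdiag y / y / y := by ring
    _ ≤ Gdiag x / x / y := by gcongr
    _ < Gdiag x / x / x := div_lt_div_of_pos_left (div_pos (Gdiag_pos hx) hx) hx hxy
    _ = Gdiag x / x ^ 2 := by ring

theorem continuousOn_Gdiag_div_sq : ContinuousOn (fun q => Gdiag q / q ^ 2) (Ioi 0) :=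
  (continuous_besselI1.continuousOn.mul continuousOn_besselK1).div (continuousOn_pow 2)
    fun _ hq => pow_ne_zero 2 (ne_of_gt hq)

theorem besselK1_one_div_le_Gdiag_div_sq {q : ℝ} (hq : 0 < q) (hq1 : q ≤ 1) :
    besselK1 1 / (2 * q) ≤ Gdiag q / q ^ 2 := by
  have hK : besselK1 1 ≤ besselK1 q := antitoneOn_besselK1 hq (mem_Ioi.2 one_pos) hq1
  calc besselK1 1 / (2 * q) = q / 2 * besselK1 1 / q ^ 2 := by field_simp
    _ ≤ besselI1 q * besselK1 q / q ^ 2 := by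
        have hI := half_le_besselI1 hq.le
        have hK1 := besselK1_pos one_pos
        gcongr
        linarith

theorem Gdiag_div_sq_le_Gdiag_one_div {q : ℝ} (hq : 1 ≤ q) :
    Gdiag q / q ^ 2 ≤ Gdiag 1 / q := by
  have h : Gdiag q / q ≤ Gdiag 1 / 1 :=
    antitoneOn_Gdiag_div_self (mem_Ioi.2 one_pos) (one_pos.trans_le hq) hq
  rw [div_one] at h
  calc Gdiag q / q ^ 2 = Gdiag q / q / q := by ring
    _ ≤ Gdiag 1 / q := by gcongr

theorem exists_Gdiag_div_sq_eq {c : ℝ} (hc : 0 < c) : ∃ q, 0 < q ∧ Gdiag q / q ^ 2 = c := by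
  set a := min 1 (besselK1 1 / (2 * c))
  set b := max 1 (Gdiag 1 / c)
  have ha : 0 < a := lt_min one_pos (div_pos (besselK1_pos one_pos) (by positivity))
  have hab : a ≤ b := (min_le_left _ _).trans (le_max_left _ _)
  have hca : c ≤ Gdiag a / a ^ 2 := by
    refine le_trans ?_ (besselK1_one_div_le_Gdiag_div_sq ha (min_le_left _ _))
    have := (le_div_iff₀ (by positivity)).1 (min_le_right 1 (besselK1 1 / (2 * c)))
    rw [le_div_iff₀ (by positivity)]
    linarith
  have hbc : Gdiag b / b ^ 2 ≤ c := by
    refine (Gdiag_div_sq_le_Gdiag_one_div (le_max_left _ _)).trans ?_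
    have := (div_le_iff₀ hc).1 (le_max_right 1 (Gdiag 1 / c))
    rw [div_le_iff₀ (ha.trans_le hab)]
    linarith
  obtain ⟨q, hq, hqc⟩ := intermediate_value_Icc' hab
    (continuousOn_Gdiag_div_sq.mono (Icc_subset_Ioi_iff hab |>.2 ha)) ⟨hbc, hca⟩
  exact ⟨q, ha.trans_le hq.1, hqc⟩

theorem Gdiag_div_sq_le_of_hamiltonian_eq {M H p q : ℝ} (hM : 0 < M) (hq : 0 < q)
    (hH : (p ^ 2 + M ^ 2 / q ^ 2) * Gdiag q = H) : Gdiag q / q ^ 2 ≤ H / M ^ 2 := by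
  rw [le_div_iff₀ (by positivity), ← hH]
  have := mul_nonneg (sq_nonneg p) (Gdiag_pos hq).le
  calc Gdiag q / q ^ 2 * M ^ 2 = M ^ 2 / q ^ 2 * Gdiag q := by ring
    _ ≤ (p ^ 2 + M ^ 2 / q ^ 2) * Gdiag q := by linarith

theorem eq_mul_sqrt_div_iff {M H q G : ℝ} (hM : 0 < M) (hH : 0 < H) (hq : 0 < q) :
    q = M * √(G / H) ↔ G / q ^ 2 = H / M ^ 2 := by
  have hsqrt : q = M * √(G / H) ↔ √(G / H) = q / M := by
    rw [eq_div_iff hM.ne', mul_comm, eq_comm]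
  rw [hsqrt, sqrt_eq_iff_mul_self_eq_of_pos (by positivity)]
  constructor <;> intro h <;> field_simp at h ⊢ <;> linarith

/-- for M, H > 0 there is a unique q_* > 0 with
q_* = M √(G(q_*)/H), and along any evolution conserving
H = (p² + M²/q²) G(q,q) one has q(t) ≥ q_*. -/
theorem rotating_peakon_minimal_radius (M H : ℝ) (hM : 0 < M) (hH : 0 < H)
    (q p : ℝ → ℝ) (hqpos : ∀ t, 0 < q t)
    (hcons : ∀ t, (p t ^ 2 + M ^ 2 / (q t) ^ 2) * Gdiag (q t) = H) :
    ∃ qs : ℝ, 0 < qs ∧ qs = M * Real.sqrt (Gdiag qs / H) ∧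
      (∀ qs' : ℝ, 0 < qs' → qs' = M * Real.sqrt (Gdiag qs' / H) → qs' = qs) ∧
      ∀ t, qs ≤ q t := by
  obtain ⟨qs, hqs, hphi⟩ := exists_Gdiag_div_sq_eq (div_pos hH (pow_pos hM 2))
  refine ⟨qs, hqs, (eq_mul_sqrt_div_iff hM hH hqs).2 hphi, fun qs' hqs' heq => ?_, fun t => ?_⟩
  · exact strictAntiOn_Gdiag_div_sq.injOn hqs' hqs
      (((eq_mul_sqrt_div_iff hM hH hqs').1 heq).trans hphi.symm)
  · have hbound := Gdiag_div_sq_le_of_hamiltonian_eq hM (hqpos t) (hcons t)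
    rw [← hphi] at hbound
    exact (strictAntiOn_Gdiag_div_sq.le_iff_ge (hqpos t) hqs).1 hbound
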